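/- Let {{−,−}} be a 2-fold bracket on V satisfying the skewsymmetry {{a,b}} = −({{b,a}})^σ. Set {a,b} := m{{a,b}} ∈ V, and extend {a,−} to V⊗V by {a, x⊗y} := {a,x}⊗y + x⊗{a,y}. Then for all a,b,c ∈ V the following identity holds in V⊗V: {a, {{b,c}}} − {{ {a,b}, c }} − {{ b, {a,c} }} = (m⊗1){{a,b,c}} − (1⊗m){{b,a,c}}, where {{a,b,c}} := {{a,{{b,c}}}}_L + ({{b,{{c,a}}}}_L)^σ + ({{c,{{a,b}}}}_L)^{σ²}, and m⊗1, 1⊗m : V^{⊗3} → V⊗V multiply the first two (respectively the last two) tensor factors. -/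

import Mathlib

open TensorProduct LinearMap

section DPA

variable (𝔽 : Type) [Field 𝔽] (V : Type) [Ring V] [Algebra 𝔽 V]

/-- The swap `(u ⊗ v)^σ = v ⊗ u` on `V ⊗ V`. -/
noncomputable abbrev swap2 : V ⊗[𝔽] V ≃ₗ[𝔽] V ⊗[𝔽] V := TensorProduct.comm 𝔽 V V

/-- The cyclic permutation `(u ⊗ v ⊗ w)^σ = w ⊗ u ⊗ v` on `V ⊗ V ⊗ V = (V ⊗ V) ⊗ V`. -/
noncomputable def sigma3 : (V ⊗[𝔽] V) ⊗[𝔽] V ≃ₗ[𝔽] (V ⊗[𝔽] V) ⊗[𝔽] V :=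
  (TensorProduct.comm 𝔽 (V ⊗[𝔽] V) V).trans (TensorProduct.assoc 𝔽 V V V).symm

/-- Left multiplication `a · (u ⊗ v) = (a*u) ⊗ v` (outer bimodule structure). -/
noncomputable def lact2 (a : V) : V ⊗[𝔽] V →ₗ[𝔽] V ⊗[𝔽] V :=
  LinearMap.rTensor V (LinearMap.mulLeft 𝔽 a)

/-- Right multiplication `(u ⊗ v) · c = u ⊗ (v*c)` (outer bimodule structure). -/
noncomputable def ract2 (c : V) : V ⊗[𝔽] V →ₗ[𝔽] V ⊗[𝔽] V :=
  LinearMap.lTensor V (LinearMap.mulRight 𝔽 c)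

/-- `(u ⊗ v) ⋆₁ b = (u*b) ⊗ v`. -/
noncomputable def star1r (b : V) : V ⊗[𝔽] V →ₗ[𝔽] V ⊗[𝔽] V :=
  LinearMap.rTensor V (LinearMap.mulRight 𝔽 b)

/-- `a ⋆₁ (u ⊗ v) = u ⊗ (a*v)`. -/
noncomputable def star1l (a : V) : V ⊗[𝔽] V →ₗ[𝔽] V ⊗[𝔽] V :=
  LinearMap.lTensor V (LinearMap.mulLeft 𝔽 a)

/-- The `•`-product on `V ⊗ V`:  `(u ⊗ v) • (x ⊗ y) = (u*x) ⊗ (y*v)`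
(the multiplication of `V ⊗ Vᵒᵖ`). -/
noncomputable def bullet : V ⊗[𝔽] V →ₗ[𝔽] V ⊗[𝔽] V →ₗ[𝔽] V ⊗[𝔽] V :=
  TensorProduct.lift
    (((TensorProduct.mapBilinear (RingHom.id 𝔽) V V V V).comp (LinearMap.mul 𝔽 V)).compl₂
      ((LinearMap.mul 𝔽 V).flip))

/-- A `2`-fold bracket on `V`: an `𝔽`-bilinear map `V × V → V ⊗ V` satisfying the two
Leibniz rules `{{a,bc}} = {{a,b}}·c + b·{{a,c}}` and `{{ab,c}} = {{a,c}} ⋆₁ b + a ⋆₁ {{b,c}}`. -/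
def IsDoubleBracket (Br : V →ₗ[𝔽] V →ₗ[𝔽] V ⊗[𝔽] V) : Prop :=
  (∀ a b c : V, Br a (b * c) = ract2 𝔽 V c (Br a b) + lact2 𝔽 V b (Br a c)) ∧
  (∀ a b c : V, Br (a * b) c = star1r 𝔽 V b (Br a c) + star1l 𝔽 V a (Br b c))

variable {𝔽 V}

/-- `{{a, B}}_L` : apply the bracket to the first tensor factor. -/
noncomputable def brL (Br : V →ₗ[𝔽] V →ₗ[𝔽] V ⊗[𝔽] V) (a : V) :
    V ⊗[𝔽] V →ₗ[𝔽] (V ⊗[𝔽] V) ⊗[𝔽] V :=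
  LinearMap.rTensor V (Br a)

/-- `{{a, B}}_R` : apply the bracket to the second tensor factor. -/
noncomputable def brR (Br : V →ₗ[𝔽] V →ₗ[𝔽] V ⊗[𝔽] V) (a : V) :
    V ⊗[𝔽] V →ₗ[𝔽] (V ⊗[𝔽] V) ⊗[𝔽] V :=
  (TensorProduct.assoc 𝔽 V V V).symm.toLinearMap ∘ₗ LinearMap.lTensor V (Br a)

variable (𝔽 V)

/-- `ρ₂` : swap the last two tensor factors of `V ⊗ V ⊗ V`. -/
noncomputable def rho2 : (V ⊗[𝔽] V) ⊗[𝔽] V ≃ₗ[𝔽] (V ⊗[𝔽] V) ⊗[𝔽] V :=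
  (TensorProduct.assoc 𝔽 V V V).trans
    ((TensorProduct.congr (LinearEquiv.refl 𝔽 V) (TensorProduct.comm 𝔽 V V)).trans
      (TensorProduct.assoc 𝔽 V V V).symm)

variable {𝔽 V}

/-- Conjugated bullet action used to define the actions `•ᵢ` of `V ⊗ V` on `V ⊗ V ⊗ V`. -/
noncomputable def conjAct (β : V ⊗[𝔽] V →ₗ[𝔽] V ⊗[𝔽] V →ₗ[𝔽] V ⊗[𝔽] V)
    (ρ : (V ⊗[𝔽] V) ⊗[𝔽] V ≃ₗ[𝔽] (V ⊗[𝔽] V) ⊗[𝔽] V) :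
    V ⊗[𝔽] V →ₗ[𝔽] (V ⊗[𝔽] V) ⊗[𝔽] V →ₗ[𝔽] (V ⊗[𝔽] V) ⊗[𝔽] V :=
  (LinearMap.lcomp 𝔽 _ ρ.toLinearMap) ∘ₗ
    (LinearMap.llcomp 𝔽 ((V ⊗[𝔽] V) ⊗[𝔽] V) ((V ⊗[𝔽] V) ⊗[𝔽] V) ((V ⊗[𝔽] V) ⊗[𝔽] V)
      ρ.symm.toLinearMap) ∘ₗ
    (LinearMap.rTensorHom V) ∘ₗ β

variable (𝔽 V)

/-- The right action `X •₁ A`, i.e. `(x⊗y⊗z) •₁ (a⊗b) = x⊗(y*a)⊗(b*z)`;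
`bAct1R A X = X •₁ A`. -/
noncomputable def bAct1R : V ⊗[𝔽] V →ₗ[𝔽] (V ⊗[𝔽] V) ⊗[𝔽] V →ₗ[𝔽] (V ⊗[𝔽] V) ⊗[𝔽] V :=
  conjAct (bullet 𝔽 V).flip ((sigma3 𝔽 V).trans (sigma3 𝔽 V))

/-- The left action `A •₂ X`, i.e. `(a⊗b) •₂ (x⊗y⊗z) = (a*x)⊗y⊗(z*b)`. -/
noncomputable def bAct2L : V ⊗[𝔽] V →ₗ[𝔽] (V ⊗[𝔽] V) ⊗[𝔽] V →ₗ[𝔽] (V ⊗[𝔽] V) ⊗[𝔽] V :=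
  conjAct (bullet 𝔽 V) (rho2 𝔽 V)

/-- The right action `X •₃ A`, i.e. `(x⊗y⊗z) •₃ (a⊗b) = (x*a)⊗(b*y)⊗z`;
`bAct3R A X = X •₃ A`. -/
noncomputable def bAct3R : V ⊗[𝔽] V →ₗ[𝔽] (V ⊗[𝔽] V) ⊗[𝔽] V →ₗ[𝔽] (V ⊗[𝔽] V) ⊗[𝔽] V :=
  conjAct (bullet 𝔽 V).flip (LinearEquiv.refl 𝔽 ((V ⊗[𝔽] V) ⊗[𝔽] V))

/-- `a ⋆₁ (x⊗y⊗z) = x⊗(a*y)⊗z`. -/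
noncomputable def slot2L (a : V) : (V ⊗[𝔽] V) ⊗[𝔽] V →ₗ[𝔽] (V ⊗[𝔽] V) ⊗[𝔽] V :=
  LinearMap.rTensor V (LinearMap.lTensor V (LinearMap.mulLeft 𝔽 a))

/-- `(x⊗y⊗z) ⋆₁ b = x⊗(y*b)⊗z`. -/
noncomputable def slot2R (b : V) : (V ⊗[𝔽] V) ⊗[𝔽] V →ₗ[𝔽] (V ⊗[𝔽] V) ⊗[𝔽] V :=
  LinearMap.rTensor V (LinearMap.lTensor V (LinearMap.mulRight 𝔽 b))

/-- `a ⋆₂ (x⊗y⊗z) = x⊗y⊗(a*z)`. -/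
noncomputable def slot3L (a : V) : (V ⊗[𝔽] V) ⊗[𝔽] V →ₗ[𝔽] (V ⊗[𝔽] V) ⊗[𝔽] V :=
  LinearMap.lTensor (V ⊗[𝔽] V) (LinearMap.mulLeft 𝔽 a)

/-- `(x⊗y⊗z) ⋆₂ b = (x*b)⊗y⊗z`. -/
noncomputable def slot1R (b : V) : (V ⊗[𝔽] V) ⊗[𝔽] V →ₗ[𝔽] (V ⊗[𝔽] V) ⊗[𝔽] V :=
  LinearMap.rTensor V (LinearMap.rTensor V (LinearMap.mulRight 𝔽 b))

/-- outer left: `a · (x⊗y⊗z) = (a*x)⊗y⊗z`. -/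
noncomputable def slot1L (a : V) : (V ⊗[𝔽] V) ⊗[𝔽] V →ₗ[𝔽] (V ⊗[𝔽] V) ⊗[𝔽] V :=
  LinearMap.rTensor V (LinearMap.rTensor V (LinearMap.mulLeft 𝔽 a))

/-- outer right: `(x⊗y⊗z) · b = x⊗y⊗(z*b)`. -/
noncomputable def slot3R (b : V) : (V ⊗[𝔽] V) ⊗[𝔽] V →ₗ[𝔽] (V ⊗[𝔽] V) ⊗[𝔽] V :=
  LinearMap.lTensor (V ⊗[𝔽] V) (LinearMap.mulRight 𝔽 b)

variable {𝔽 V}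

/-- The triple bracket `{{a,b,c}}`. -/
noncomputable def triple (Br : V →ₗ[𝔽] V →ₗ[𝔽] V ⊗[𝔽] V) (a b c : V) :
    (V ⊗[𝔽] V) ⊗[𝔽] V :=
  brL Br a (Br b c) + sigma3 𝔽 V (brL Br b (Br c a)) +
    sigma3 𝔽 V (sigma3 𝔽 V (brL Br c (Br a b)))

variable (𝔽 V)

/-- Skewsymmetry of a 2-fold bracket. -/
def IsSkew (Br : V →ₗ[𝔽] V →ₗ[𝔽] V ⊗[𝔽] V) : Prop :=
  ∀ a b : V, Br a b = - swap2 𝔽 V (Br b a)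

/-- The span of commutators `[V,V]`. -/
def commSub : Submodule 𝔽 V := Submodule.span 𝔽 {x : V | ∃ a b : V, x = a * b - b * a}

variable {𝔽 V}

/-- The associated bracket `{a,b} = m {{a,b}}`. -/
noncomputable def sb (Br : V →ₗ[𝔽] V →ₗ[𝔽] V ⊗[𝔽] V) (a b : V) : V :=
  LinearMap.mul' 𝔽 V (Br a b)

/-- A 2-fold derivation: `D(ab) = (Da)·b + a·(Db)`. -/
def Is2Deriv (D : V →ₗ[𝔽] V ⊗[𝔽] V) : Prop :=
  ∀ a b : V, D (a * b) = ract2 𝔽 V b (D a) + lact2 𝔽 V a (D b)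

/-- `D` and `E` strongly commute: `D_L ∘ E = E_R ∘ D`. -/
def StronglyComm (D E : V →ₗ[𝔽] V ⊗[𝔽] V) : Prop :=
  ∀ f : V, LinearMap.rTensor V D (E f) =
    (TensorProduct.assoc 𝔽 V V V).symm (LinearMap.lTensor V E (D f))


/-- `{a,−}` extended to `V ⊗ V` by `{a, x⊗y} = {a,x}⊗y + x⊗{a,y}`. -/
noncomputable def extSb (𝔽 : Type) [Field 𝔽] (V : Type) [Ring V] [Algebra 𝔽 V]
    (Br : V →ₗ[𝔽] V →ₗ[𝔽] V ⊗[𝔽] V) (a : V) : V ⊗[𝔽] V →ₗ[𝔽] V ⊗[𝔽] V :=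
  LinearMap.rTensor V ((LinearMap.mul' 𝔽 V) ∘ₗ Br a) +
    LinearMap.lTensor V ((LinearMap.mul' 𝔽 V) ∘ₗ Br a)

/-- `m ⊗ 1 : V⊗V⊗V → V⊗V`, multiplying the first two factors. -/
noncomputable def mOne (𝔽 : Type) [Field 𝔽] (V : Type) [Ring V] [Algebra 𝔽 V] :
    (V ⊗[𝔽] V) ⊗[𝔽] V →ₗ[𝔽] V ⊗[𝔽] V :=
  LinearMap.rTensor V (LinearMap.mul' 𝔽 V)

/-- `1 ⊗ m : V⊗V⊗V → V⊗V`, multiplying the last two factors. -/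
noncomputable def oneM (𝔽 : Type) [Field 𝔽] (V : Type) [Ring V] [Algebra 𝔽 V] :
    (V ⊗[𝔽] V) ⊗[𝔽] V →ₗ[𝔽] V ⊗[𝔽] V :=
  (LinearMap.lTensor V (LinearMap.mul' 𝔽 V)) ∘ₗ (TensorProduct.assoc 𝔽 V V V).toLinearMap

/-! Each term on the left is rewritten through the multiplication `m`. Splitting `{a, X}` along
the two tensor factors gives `(m⊗1){{a,X}}_L + (1⊗m)({{a,X^σ}}_L)^σ`; the Leibniz rule in the
second argument gives `{{b, mX}} = (m⊗1)({{b,X^σ}}_L)^σ + (1⊗m){{b,X}}_L`; the Leibniz rule in the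
first argument, with skewsymmetry moving `c` to the front, gives
`{{mX, c}} = −(m⊗1)({{c,X}}_L)^{σ²} − (1⊗m)({{c,X^σ}}_L)^{σ²}`. Taking `X = {{b,c}}, {{a,b}}, {{a,c}}`
and using skewsymmetry once more to replace each `X^σ` by the bracket with swapped arguments
yields exactly the six terms of `(m⊗1){{a,b,c}} − (1⊗m){{b,a,c}}`. -/

section BracketExpansion

lemma mOne_tmul (u : V ⊗[𝔽] V) (y : V) :
    mOne 𝔽 V (u ⊗ₜ[𝔽] y) = LinearMap.mul' 𝔽 V u ⊗ₜ[𝔽] y := by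
  simp [mOne]

lemma oneM_tmul (u : V ⊗[𝔽] V) (y : V) :
    oneM 𝔽 V (u ⊗ₜ[𝔽] y) = ract2 𝔽 V y u := by
  induction u using TensorProduct.induction_on <;> simp_all [oneM, ract2, add_tmul]

lemma mOne_sigma3_tmul (u : V ⊗[𝔽] V) (y : V) :
    mOne 𝔽 V (sigma3 𝔽 V (u ⊗ₜ[𝔽] y)) = lact2 𝔽 V y u := by
  induction u using TensorProduct.induction_on <;> simp_all [mOne, sigma3, lact2, add_tmul]

lemma oneM_sigma3_tmul (u : V ⊗[𝔽] V) (y : V) :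
    oneM 𝔽 V (sigma3 𝔽 V (u ⊗ₜ[𝔽] y)) = y ⊗ₜ[𝔽] LinearMap.mul' 𝔽 V u := by
  induction u using TensorProduct.induction_on <;> simp_all [oneM, sigma3, add_tmul, tmul_add]

lemma mOne_sigma3_sigma3_tmul (u : V ⊗[𝔽] V) (y : V) :
    mOne 𝔽 V (sigma3 𝔽 V (sigma3 𝔽 V (u ⊗ₜ[𝔽] y))) = swap2 𝔽 V (ract2 𝔽 V y u) := by
  induction u using TensorProduct.induction_on <;> simp_all [mOne, sigma3, ract2, add_tmul]

lemma oneM_sigma3_sigma3_tmul (u : V ⊗[𝔽] V) (y : V) :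
    oneM 𝔽 V (sigma3 𝔽 V (sigma3 𝔽 V (u ⊗ₜ[𝔽] y))) = star1l 𝔽 V y (swap2 𝔽 V u) := by
  induction u using TensorProduct.induction_on <;> simp_all [oneM, sigma3, star1l, add_tmul]

lemma swap2_ract2_swap2 (y : V) (w : V ⊗[𝔽] V) :
    swap2 𝔽 V (ract2 𝔽 V y (swap2 𝔽 V w)) = star1r 𝔽 V y w := by
  induction w using TensorProduct.induction_on <;> simp_all [ract2, star1r]

variable {Br : V →ₗ[𝔽] V →ₗ[𝔽] V ⊗[𝔽] V}

lemma IsSkew.swap2_eq_neg (hskew : IsSkew 𝔽 V Br) (a b : V) :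
    swap2 𝔽 V (Br a b) = -Br b a := by
  rw [hskew b a, neg_neg]

variable (Br) in
lemma extSb_eq_mOne_add_oneM (a : V) (X : V ⊗[𝔽] V) :
    extSb 𝔽 V Br a X =
      mOne 𝔽 V (brL Br a X) + oneM 𝔽 V (sigma3 𝔽 V (brL Br a (swap2 𝔽 V X))) := by
  induction X using TensorProduct.induction_on with
  | zero => simp
  | tmul x y =>
    simp only [extSb, brL, LinearMap.add_apply, rTensor_tmul, lTensor_tmul,
      TensorProduct.comm_tmul, coe_comp, Function.comp_apply, mOne_tmul, oneM_sigma3_tmul]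
  | add x z ihx ihz => simp only [map_add, ihx, ihz]; abel

lemma IsDoubleBracket.apply_mul'_right (hBr : IsDoubleBracket 𝔽 V Br) (b : V) (X : V ⊗[𝔽] V) :
    Br b (LinearMap.mul' 𝔽 V X) =
      mOne 𝔽 V (sigma3 𝔽 V (brL Br b (swap2 𝔽 V X))) + oneM 𝔽 V (brL Br b X) := by
  induction X using TensorProduct.induction_on with
  | zero => simp
  | tmul x y =>
    simp only [brL, TensorProduct.comm_tmul, rTensor_tmul, mul'_apply, mOne_sigma3_tmul,
      oneM_tmul, hBr.1 b x y]
    abel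
  | add x z ihx ihz => simp only [map_add, ihx, ihz]; abel

lemma IsDoubleBracket.apply_mul'_left (hBr : IsDoubleBracket 𝔽 V Br) (hskew : IsSkew 𝔽 V Br)
    (c : V) (X : V ⊗[𝔽] V) :
    Br (LinearMap.mul' 𝔽 V X) c =
      -mOne 𝔽 V (sigma3 𝔽 V (sigma3 𝔽 V (brL Br c X))) -
        oneM 𝔽 V (sigma3 𝔽 V (sigma3 𝔽 V (brL Br c (swap2 𝔽 V X)))) := by
  induction X using TensorProduct.induction_on with
  | zero => simp
  | tmul x y =>
    simp only [brL, TensorProduct.comm_tmul, rTensor_tmul, mul'_apply,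
      mOne_sigma3_sigma3_tmul, oneM_sigma3_sigma3_tmul, hBr.2 x y c, hskew c x, hskew c y,
      map_neg, swap2_ract2_swap2, TensorProduct.comm_comm]
    abel
  | add x z ihx ihz => simp only [map_add, LinearMap.add_apply, ihx, ihz]; abel

end BracketExpansion

theorem statement_6_general (𝔽 : Type) [Field 𝔽] (V : Type) [Ring V] [Algebra 𝔽 V]
    (Br : V →ₗ[𝔽] V →ₗ[𝔽] V ⊗[𝔽] V) (hBr : IsDoubleBracket 𝔽 V Br)
    (hskew : IsSkew 𝔽 V Br) (a b c : V) :
    extSb 𝔽 V Br a (Br b c) - Br (sb Br a b) c - Br b (sb Br a c) =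
      mOne 𝔽 V (triple Br a b c) - oneM 𝔽 V (triple Br b a c) := by
  rw [sb, sb, extSb_eq_mOne_add_oneM, hBr.apply_mul'_left hskew, hBr.apply_mul'_right,
    hskew.swap2_eq_neg b c, hskew.swap2_eq_neg a b, hskew.swap2_eq_neg a c]
  simp only [triple, map_add, map_neg]
  abel

/-- for a skewsymmetric 2-fold bracket,
`{a,{{b,c}}} − {{ {a,b}, c }} − {{ b, {a,c} }} = (m⊗1){{a,b,c}} − (1⊗m){{b,a,c}}`. -/
theorem statement_6 (𝔽 : Type) [Field 𝔽] [CharZero 𝔽] (V : Type) [Ring V] [Algebra 𝔽 V]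
    (Br : V →ₗ[𝔽] V →ₗ[𝔽] V ⊗[𝔽] V) (hBr : IsDoubleBracket 𝔽 V Br)
    (hskew : IsSkew 𝔽 V Br) (a b c : V) :
    extSb 𝔽 V Br a (Br b c) - Br (sb Br a b) c - Br b (sb Br a c) =
      mOne 𝔽 V (triple Br a b c) - oneM 𝔽 V (triple Br b a c) :=
  statement_6_general 𝔽 V Br hBr hskew a b c
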